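/- arXiv:2510.19156 — 4 statements merged into one kernel-verified Lean document; each statement's English description precedes it below -/
import Mathlib

section
/- Let 𝔤 be a real Lie algebra, 𝔥 a subalgebra, and J an 𝔥-invariant complex structure on 𝔤/𝔥. Then J is integrable (i.e., the Nijenhuis bilinear map N vanishes identically) if and only if p⁻¹((𝔤/𝔥)₊) is a complex Lie subalgebra of 𝔤_ℂ, where p : 𝔤_ℂ → (𝔤/𝔥)_ℂ is the complexified quotient map and (𝔤/𝔥)₊ is the i-eigenspace of J. -/
open Module TensorProduct

/-- The quotient map `𝔤 → 𝔤/𝔥`. -/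
def qmk {L : Type*} [LieRing L] [LieAlgebra ℝ L] (H : LieSubalgebra ℝ L) :
    L →ₗ[ℝ] L ⧸ H.toSubmodule := H.toSubmodule.mkQ

/-- `J` is integrable: the Nijenhuis bilinear map
`N(u,v) = p[x,y] + J(p[x',y] + p[x,y']) − p[x',y']` vanishes for all lifts. -/
def Integrable {L : Type*} [LieRing L] [LieAlgebra ℝ L] (H : LieSubalgebra ℝ L)
    (J : (L ⧸ H.toSubmodule) →ₗ[ℝ] (L ⧸ H.toSubmodule)) : Prop :=
  ∀ x y x' y' : L, qmk H x' = J (qmk H x) → qmk H y' = J (qmk H y) →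
    qmk H ⁅x, y⁆ + J (qmk H ⁅x', y⁆ + qmk H ⁅x, y'⁆) - qmk H ⁅x', y'⁆ = 0

/-- `𝔩 = p⁻¹((𝔤/𝔥)₊) ⊆ 𝔤_ℂ`: the preimage under the complexified quotient map
`p : 𝔤_ℂ → (𝔤/𝔥)_ℂ` of the `i`-eigenspace of the complexification of `J`. -/
noncomputable def lsub {L : Type*} [LieRing L] [LieAlgebra ℝ L] (H : LieSubalgebra ℝ L)
    (J : (L ⧸ H.toSubmodule) →ₗ[ℝ] (L ⧸ H.toSubmodule)) : Submodule ℂ (ℂ ⊗[ℝ] L) :=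
  Submodule.comap ((qmk H).baseChange ℂ)
    (Module.End.eigenspace (J.baseChange ℂ) Complex.I)


section Aux

variable {M : Type*} [AddCommGroup M] [Module ℝ M]

/-- extract the real part coefficient -/
noncomputable def reM (M : Type*) [AddCommGroup M] [Module ℝ M] : ℂ ⊗[ℝ] M →ₗ[ℝ] M :=
  (TensorProduct.lid ℝ M).toLinearMap ∘ₗ (TensorProduct.map Complex.reLm LinearMap.id)

noncomputable def imM (M : Type*) [AddCommGroup M] [Module ℝ M] : ℂ ⊗[ℝ] M →ₗ[ℝ] M :=
  (TensorProduct.lid ℝ M).toLinearMap ∘ₗ (TensorProduct.map Complex.imLm LinearMap.id)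

@[simp] lemma reM_tmul (z : ℂ) (m : M) : reM M (z ⊗ₜ m) = z.re • m := by
  simp [reM]

@[simp] lemma imM_tmul (z : ℂ) (m : M) : imM M (z ⊗ₜ m) = z.im • m := by
  simp [imM]

lemma tmul_inj {a b c d : M}
    (h : (1 : ℂ) ⊗ₜ[ℝ] a + Complex.I ⊗ₜ[ℝ] b = (1 : ℂ) ⊗ₜ[ℝ] c + Complex.I ⊗ₜ[ℝ] d) :
    a = c ∧ b = d := by
  constructor
  · have := congrArg (reM M) h
    simpa using this
  · have := congrArg (imM M) h
    simpa using this

lemma decomp (a : ℂ ⊗[ℝ] M) : ∃ x y : M, a = (1 : ℂ) ⊗ₜ[ℝ] x + Complex.I ⊗ₜ[ℝ] y := by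
  induction a using TensorProduct.induction_on with
  | zero => exact ⟨0, 0, by simp⟩
  | tmul z m =>
    refine ⟨z.re • m, z.im • m, ?_⟩
    rw [tmul_smul, tmul_smul]
    rw [smul_tmul', smul_tmul', ← add_tmul]
    congr 1
    apply Complex.ext <;> simp
  | add x y hx hy =>
    obtain ⟨x1, y1, rfl⟩ := hx
    obtain ⟨x2, y2, rfl⟩ := hy
    exact ⟨x1 + x2, y1 + y2, by rw [tmul_add, tmul_add]; abel⟩

end Aux

lemma mem_lsub_iff {L : Type*} [LieRing L] [LieAlgebra ℝ L] (H : LieSubalgebra ℝ L)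
    (J : (L ⧸ H.toSubmodule) →ₗ[ℝ] (L ⧸ H.toSubmodule))
    (hJ2 : J ∘ₗ J = -LinearMap.id) (x y : L) :
    ((1 : ℂ) ⊗ₜ[ℝ] x + Complex.I ⊗ₜ[ℝ] y) ∈ lsub H J ↔ qmk H y = -J (qmk H x) := by
  have hJJ : ∀ v, J (J v) = -v := by
    intro v
    have := congrArg (fun f => f v) hJ2
    simpa using this
  have key : ∀ v, (J.baseChange ℂ) ((qmk H).baseChange ℂ ((1:ℂ) ⊗ₜ[ℝ] x + Complex.I ⊗ₜ[ℝ] y))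
      = v ↔ (1:ℂ) ⊗ₜ (J (qmk H x)) + Complex.I ⊗ₜ (J (qmk H y)) = v := by
    intro v
    rw [map_add, map_add, LinearMap.baseChange_tmul, LinearMap.baseChange_tmul,
      LinearMap.baseChange_tmul, LinearMap.baseChange_tmul]
  rw [lsub, Submodule.mem_comap, Module.End.mem_eigenspace_iff]
  have hsmul : Complex.I • ((qmk H).baseChange ℂ ((1:ℂ) ⊗ₜ[ℝ] x + Complex.I ⊗ₜ[ℝ] y))
      = (1:ℂ) ⊗ₜ (-(qmk H y)) + Complex.I ⊗ₜ (qmk H x) := by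
    rw [map_add, LinearMap.baseChange_tmul, LinearMap.baseChange_tmul, smul_add,
      smul_tmul', smul_tmul']
    rw [smul_eq_mul, smul_eq_mul, Complex.I_mul_I, mul_one]
    rw [show ((-1 : ℂ) ⊗ₜ[ℝ] (qmk H y) : ℂ ⊗[ℝ] (L ⧸ H.toSubmodule)) = (1:ℂ) ⊗ₜ (-(qmk H y)) by
      rw [neg_tmul, tmul_neg]]
    abel
  rw [hsmul, key]
  constructor
  · intro h
    obtain ⟨h1, _⟩ := tmul_inj h
    rw [h1, neg_neg]
  · intro h
    rw [h]
    congr 1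
    · rw [neg_neg]
    · rw [map_neg, hJJ, neg_neg]

lemma bracket_decomp {L : Type*} [LieRing L] [LieAlgebra ℝ L] (x y u v : L) :
    ⁅(1:ℂ) ⊗ₜ[ℝ] x + Complex.I ⊗ₜ[ℝ] y, (1:ℂ) ⊗ₜ[ℝ] u + Complex.I ⊗ₜ[ℝ] v⁆
      = (1:ℂ) ⊗ₜ[ℝ] (⁅x,u⁆ - ⁅y,v⁆) + Complex.I ⊗ₜ[ℝ] (⁅x,v⁆ + ⁅y,u⁆) := by
  simp only [lie_add, add_lie, LieAlgebra.ExtendScalars.bracket_tmul, one_mul, mul_one,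
    Complex.I_mul_I, tmul_sub, tmul_add, neg_tmul]
  abel

/-- an `𝔥`-invariant complex structure `J` on `𝔤/𝔥` is integrable if and
only if `p⁻¹((𝔤/𝔥)₊)` is a (complex) Lie subalgebra of `𝔤_ℂ`. -/
theorem stmt4 {L : Type*} [LieRing L] [LieAlgebra ℝ L] (H : LieSubalgebra ℝ L)
    (J : (L ⧸ H.toSubmodule) →ₗ[ℝ] (L ⧸ H.toSubmodule))
    (hJ2 : J ∘ₗ J = -LinearMap.id)
    (hinv : ∀ h ∈ H, ∀ x y : L,
      qmk H y = J (qmk H x) → J (qmk H ⁅h, x⁆) = qmk H ⁅h, y⁆) :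
    Integrable H J ↔
      ∀ a b : ℂ ⊗[ℝ] L, a ∈ lsub H J → b ∈ lsub H J → ⁅a, b⁆ ∈ lsub H J := by
  have hJJ : ∀ v, J (J v) = -v := by
    intro v
    have := congrArg (fun f => f v) hJ2
    simpa using this
  constructor
  · intro hInt a b ha hb
    obtain ⟨x, y, rfl⟩ := decomp a
    obtain ⟨u, v, rfl⟩ := decomp b
    rw [mem_lsub_iff H J hJ2] at ha hb
    rw [bracket_decomp, mem_lsub_iff H J hJ2]
    have hN := hInt x u (-y) (-v) (by rw [map_neg, ha, neg_neg]) (by rw [map_neg, hb, neg_neg])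
    simp only [neg_lie, lie_neg, map_neg, map_add, neg_neg] at hN
    have h1 : J (qmk H ⁅x,v⁆ + qmk H ⁅y,u⁆) = qmk H ⁅x,u⁆ - qmk H ⁅y,v⁆ := by
      rw [map_add, ← sub_eq_zero, ← neg_eq_zero, ← hN]
      abel
    rw [map_add, map_sub, ← h1, hJJ, neg_neg]
  · intro hcl x y x' y' hx hy
    have ha : ((1:ℂ) ⊗ₜ[ℝ] x + Complex.I ⊗ₜ[ℝ] (-x')) ∈ lsub H J :=
      (mem_lsub_iff H J hJ2 _ _).mpr (by rw [map_neg, hx])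
    have hb : ((1:ℂ) ⊗ₜ[ℝ] y + Complex.I ⊗ₜ[ℝ] (-y')) ∈ lsub H J :=
      (mem_lsub_iff H J hJ2 _ _).mpr (by rw [map_neg, hy])
    have hthis := hcl _ _ ha hb
    rw [bracket_decomp, mem_lsub_iff H J hJ2] at hthis
    simp only [lie_neg, neg_lie, neg_neg, map_add, map_sub, map_neg] at hthis
    have h2 : J (qmk H ⁅x',y⁆ + qmk H ⁅x,y'⁆) = -(qmk H ⁅x,y⁆ - qmk H ⁅x',y'⁆) := by
      have h3 := congrArg (fun t => -t) hthis
      simp only [neg_add, neg_neg] at h3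
      rw [show qmk H ⁅x',y⁆ + qmk H ⁅x,y'⁆ = qmk H ⁅x,y'⁆ + qmk H ⁅x',y⁆ from add_comm _ _,
        h3, ← map_sub, hJJ]
    rw [h2]
    abel
end

section
/- Let 𝔤 be a real Lie algebra, 𝔥 a subalgebra, J an 𝔥-invariant integrable complex structure on 𝔤/𝔥, and 𝔩 = p⁻¹((𝔤/𝔥)₊) ⊆ 𝔤_ℂ. Then: (a) 𝔤_ℂ = 𝔤 + 𝔩 (as real vector spaces); (b) 𝔤_ℂ = 𝔩 + τ(𝔩); and (c) 𝔥_ℂ = 𝔩 ∩ τ(𝔩), where τ denotes complex conjugation of 𝔤_ℂ with respect to 𝔤. -/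
/-!
Given `x`, choose `x'` with `p x' = J (p x)`; then `u = 1 ⊗ x - i ⊗ x'` lies in `𝔩`, and
`i ⊗ x = i • u - 1 ⊗ x'`, `2 • (1 ⊗ x) = u + τ u` give (a) and (b).
For (c), `τ` commutes with `p_ℂ` and `J_ℂ`, so `p_ℂ` maps `𝔩 ∩ τ(𝔩)` into the intersection of the
`±i`-eigenspaces of `J_ℂ`, which is zero; and `ker p_ℂ = 𝔥_ℂ` since `ℂ` is flat over `ℝ`.
-/

open Module TensorProduct

/-- Complex conjugation `τ` on `𝔤_ℂ = ℂ ⊗[ℝ] 𝔤` with respect to `𝔤`. -/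
noncomputable def conjTau (L : Type*) [AddCommGroup L] [Module ℝ L] :
    ℂ ⊗[ℝ] L →ₗ[ℝ] ℂ ⊗[ℝ] L :=
  TensorProduct.map Complex.conjAe.toLinearMap LinearMap.id

theorem LinearMap.ker_baseChange {R A M N : Type*} [CommRing R] [CommRing A] [Algebra R A]
    [Module.Flat R A] [AddCommGroup M] [Module R M] [AddCommGroup N] [Module R N]
    (f : M →ₗ[R] N) : LinearMap.ker (f.baseChange A) = (LinearMap.ker f).baseChange A :=
  Module.Flat.ker_lTensor_eq A A f

section conjTau

variable {L M : Type*} [AddCommGroup L] [Module ℝ L] [AddCommGroup M] [Module ℝ M]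

@[simp]
lemma conjTau_tmul (c : ℂ) (x : L) : conjTau L (c ⊗ₜ[ℝ] x) = starRingEnd ℂ c ⊗ₜ[ℝ] x := rfl

lemma conjTau_conjTau (z : ℂ ⊗[ℝ] L) : conjTau L (conjTau L z) = z := by
  induction z using TensorProduct.induction_on with
  | zero => simp
  | tmul c x => simp
  | add a b ha hb => simp only [map_add, ha, hb]

lemma conjTau_smul (c : ℂ) (z : ℂ ⊗[ℝ] L) :
    conjTau L (c • z) = starRingEnd ℂ c • conjTau L z := by
  induction z using TensorProduct.induction_on with
  | zero => simp
  | tmul d x => simp [smul_tmul']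
  | add a b ha hb => simp only [smul_add, map_add, ha, hb]

lemma baseChange_conjTau (f : L →ₗ[ℝ] M) (z : ℂ ⊗[ℝ] L) :
    f.baseChange ℂ (conjTau L z) = conjTau M (f.baseChange ℂ z) := by
  induction z using TensorProduct.induction_on with
  | zero => simp
  | tmul c x => simp
  | add a b ha hb => simp only [map_add, ha, hb]

lemma conjTau_mem_baseChange {p : Submodule ℝ L} {z : ℂ ⊗[ℝ] L} (hz : z ∈ p.baseChange ℂ) :
    conjTau L z ∈ p.baseChange ℂ := by
  obtain ⟨w, rfl⟩ := hz
  exact ⟨conjTau p w, baseChange_conjTau p.subtype w⟩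

lemma conjTau_mem_eigenspace (J : Module.End ℝ L) {μ : ℂ} {z : ℂ ⊗[ℝ] L}
    (hz : z ∈ Module.End.eigenspace (J.baseChange ℂ) μ) :
    conjTau L z ∈ Module.End.eigenspace (J.baseChange ℂ) (starRingEnd ℂ μ) := by
  rw [Module.End.mem_eigenspace_iff] at hz ⊢
  rw [baseChange_conjTau, hz, conjTau_smul]

lemma eq_top_of_one_tmul_mem_of_I_tmul_mem (S : Submodule ℝ (ℂ ⊗[ℝ] L))
    (h1 : ∀ x, (1 : ℂ) ⊗ₜ[ℝ] x ∈ S) (hI : ∀ x, Complex.I ⊗ₜ[ℝ] x ∈ S) : S = ⊤ := by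
  rw [eq_top_iff]
  rintro z -
  induction z using TensorProduct.induction_on with
  | zero => exact S.zero_mem
  | tmul c x =>
    have hc : c ⊗ₜ[ℝ] x = c.re • ((1 : ℂ) ⊗ₜ[ℝ] x) + c.im • (Complex.I ⊗ₜ[ℝ] x) := by
      rw [smul_tmul', smul_tmul', ← add_tmul]
      congr 1
      simp [Complex.real_smul]
    rw [hc]
    exact add_mem (S.smul_mem _ (h1 x)) (S.smul_mem _ (hI x))
  | add a b ha hb => exact add_mem ha hb

end conjTau

section ComplexStructure

variable {L Q : Type*} [AddCommGroup L] [Module ℝ L] [AddCommGroup Q] [Module ℝ Q]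
  (f : L →ₗ[ℝ] Q) (J : Module.End ℝ Q)

noncomputable def comapEigenspaceI : Submodule ℂ (ℂ ⊗[ℝ] L) :=
  (Module.End.eigenspace (J.baseChange ℂ) Complex.I).comap (f.baseChange ℂ)

lemma lsub_eq_comapEigenspaceI {𝔤 : Type*} [LieRing 𝔤] [LieAlgebra ℝ 𝔤]
    (H : LieSubalgebra ℝ 𝔤) (J : Module.End ℝ (𝔤 ⧸ H.toSubmodule)) :
    lsub H J = comapEigenspaceI (qmk H) J := rfl

variable {f J}

lemma one_tmul_sub_I_tmul_mem_eigenspace (hJ : J ∘ₗ J = -LinearMap.id) (v : Q) :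
    (1 : ℂ) ⊗ₜ[ℝ] v - Complex.I ⊗ₜ[ℝ] J v ∈
      Module.End.eigenspace (J.baseChange ℂ) Complex.I := by
  have hJJ : J (J v) = -v := by simpa using LinearMap.congr_fun hJ v
  rw [Module.End.mem_eigenspace_iff, map_sub, LinearMap.baseChange_tmul,
    LinearMap.baseChange_tmul, hJJ, smul_sub, smul_tmul', smul_tmul']
  simp only [smul_eq_mul, mul_one, Complex.I_mul_I, tmul_neg, neg_tmul]
  abel

lemma one_tmul_sub_I_tmul_mem_comapEigenspaceI (hJ : J ∘ₗ J = -LinearMap.id) {x x' : L}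
    (hx' : f x' = J (f x)) :
    (1 : ℂ) ⊗ₜ[ℝ] x - Complex.I ⊗ₜ[ℝ] x' ∈ comapEigenspaceI f J := by
  have h := one_tmul_sub_I_tmul_mem_eigenspace hJ (f x)
  rwa [← hx'] at h

lemma baseChange_ker_le_comapEigenspaceI :
    (LinearMap.ker f).baseChange ℂ ≤ comapEigenspaceI f J := by
  rw [← LinearMap.ker_baseChange]
  exact Submodule.comap_mono bot_le

theorem range_mk_one_sup_comapEigenspaceI (hf : Function.Surjective f)
    (hJ : J ∘ₗ J = -LinearMap.id) :
    LinearMap.range (TensorProduct.mk ℝ ℂ L 1) ⊔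
      (comapEigenspaceI f J).restrictScalars ℝ = ⊤ := by
  refine eq_top_of_one_tmul_mem_of_I_tmul_mem _ (fun x ↦ ?_) fun x ↦ ?_
  · exact Submodule.mem_sup_left ⟨x, rfl⟩
  obtain ⟨x', hx'⟩ := hf (J (f x))
  have hu := one_tmul_sub_I_tmul_mem_comapEigenspaceI hJ hx'
  have hI : Complex.I ⊗ₜ[ℝ] x =
      Complex.I • ((1 : ℂ) ⊗ₜ[ℝ] x - Complex.I ⊗ₜ[ℝ] x') - (1 : ℂ) ⊗ₜ[ℝ] x' := by
    simp [smul_sub, smul_tmul', neg_tmul]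
  rw [hI]
  refine sub_mem (Submodule.mem_sup_right ?_) (Submodule.mem_sup_left ⟨x', rfl⟩)
  exact (Submodule.restrictScalars_mem ℝ _ _).mpr (Submodule.smul_mem _ Complex.I hu)

theorem comapEigenspaceI_sup_map_conjTau (hf : Function.Surjective f)
    (hJ : J ∘ₗ J = -LinearMap.id) :
    (comapEigenspaceI f J).restrictScalars ℝ ⊔
      ((comapEigenspaceI f J).restrictScalars ℝ).map (conjTau L) = ⊤ := by
  rw [eq_top_iff, ← range_mk_one_sup_comapEigenspaceI hf hJ]
  refine sup_le ?_ le_sup_left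
  rintro _ ⟨x, rfl⟩
  obtain ⟨x', hx'⟩ := hf (J (f x))
  set u := (1 : ℂ) ⊗ₜ[ℝ] x - Complex.I ⊗ₜ[ℝ] x'
  have hu : u ∈ comapEigenspaceI f J := one_tmul_sub_I_tmul_mem_comapEigenspaceI hJ hx'
  have h2 : (2 : ℝ) • TensorProduct.mk ℝ ℂ L 1 x = u + conjTau L u := by
    simp only [u, map_sub, conjTau_tmul, map_one, Complex.conj_I, neg_tmul, mk_apply]
    rw [two_smul]
    abel
  refine (Submodule.smul_mem_iff _ (two_ne_zero' ℝ)).mp ?_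
  rw [h2]
  exact add_mem (Submodule.mem_sup_left hu) (Submodule.mem_sup_right ⟨u, hu, rfl⟩)

theorem comapEigenspaceI_inf_map_conjTau :
    (comapEigenspaceI f J).restrictScalars ℝ ⊓
        ((comapEigenspaceI f J).restrictScalars ℝ).map (conjTau L) =
      ((LinearMap.ker f).baseChange ℂ).restrictScalars ℝ := by
  refine le_antisymm ?_ fun z hz ↦
    ⟨baseChange_ker_le_comapEigenspaceI hz, conjTau L z,
      baseChange_ker_le_comapEigenspaceI (conjTau_mem_baseChange hz), conjTau_conjTau z⟩
  rintro _ ⟨hz, w, hw, rfl⟩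
  have hconj : f.baseChange ℂ (conjTau L w) ∈
      Module.End.eigenspace (J.baseChange ℂ) (-Complex.I) := by
    rw [baseChange_conjTau, ← Complex.conj_I]
    exact conjTau_mem_eigenspace J hw
  have hzero : f.baseChange ℂ (conjTau L w) = 0 :=
    Submodule.disjoint_def.mp (Module.End.disjoint_genEigenspace (J.baseChange ℂ)
      (by norm_num [Complex.ext_iff]) 1 1) _ hz hconj
  show conjTau L w ∈ (LinearMap.ker f).baseChange ℂ
  rwa [← LinearMap.ker_baseChange]

end ComplexStructure

theorem stmt6_general {L : Type*} [LieRing L] [LieAlgebra ℝ L] (H : LieSubalgebra ℝ L)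
    (J : (L ⧸ H.toSubmodule) →ₗ[ℝ] (L ⧸ H.toSubmodule))
    (hJ2 : J ∘ₗ J = -LinearMap.id) :
    LinearMap.range (TensorProduct.mk ℝ ℂ L 1) ⊔
        Submodule.restrictScalars ℝ (lsub H J) = ⊤ ∧
      Submodule.restrictScalars ℝ (lsub H J) ⊔
        Submodule.map (conjTau L) (Submodule.restrictScalars ℝ (lsub H J)) = ⊤ ∧
      Submodule.restrictScalars ℝ (lsub H J) ⊓
        Submodule.map (conjTau L) (Submodule.restrictScalars ℝ (lsub H J)) =
          Submodule.restrictScalars ℝ (Submodule.baseChange ℂ H.toSubmodule) := by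
  have hp : Function.Surjective (qmk H) := H.toSubmodule.mkQ_surjective
  rw [lsub_eq_comapEigenspaceI]
  refine ⟨range_mk_one_sup_comapEigenspaceI hp hJ2, comapEigenspaceI_sup_map_conjTau hp hJ2, ?_⟩
  rw [comapEigenspaceI_inf_map_conjTau, qmk, Submodule.ker_mkQ]

/-- with `𝔩 = p⁻¹((𝔤/𝔥)₊)` and `τ` conjugation of `𝔤_ℂ` w.r.t. `𝔤`:
(a) `𝔤_ℂ = 𝔤 + 𝔩`, (b) `𝔤_ℂ = 𝔩 + τ(𝔩)`, (c) `𝔥_ℂ = 𝔩 ∩ τ(𝔩)` (all as real vector spaces). -/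
theorem stmt6 {L : Type*} [LieRing L] [LieAlgebra ℝ L] (H : LieSubalgebra ℝ L)
    (J : (L ⧸ H.toSubmodule) →ₗ[ℝ] (L ⧸ H.toSubmodule))
    (hJ2 : J ∘ₗ J = -LinearMap.id)
    (hinv : ∀ h ∈ H, ∀ x y : L,
      qmk H y = J (qmk H x) → J (qmk H ⁅h, x⁆) = qmk H ⁅h, y⁆)
    (hint : Integrable H J) :
    LinearMap.range (TensorProduct.mk ℝ ℂ L 1) ⊔
        Submodule.restrictScalars ℝ (lsub H J) = ⊤ ∧
      Submodule.restrictScalars ℝ (lsub H J) ⊔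
        Submodule.map (conjTau L) (Submodule.restrictScalars ℝ (lsub H J)) = ⊤ ∧
      Submodule.restrictScalars ℝ (lsub H J) ⊓
        Submodule.map (conjTau L) (Submodule.restrictScalars ℝ (lsub H J)) =
          Submodule.restrictScalars ℝ (Submodule.baseChange ℂ H.toSubmodule) :=
  stmt6_general H J hJ2
end

section
/- Let 𝔤 be a compact Lie algebra (a real Lie algebra with an ad-invariant positive-definite inner product) and 𝔟 a solvable real subalgebra of 𝔤_ℂ. Then 𝔟 ∩ 𝔤 is an abelian subalgebra of 𝔤. -/
open Module TensorProduct

/-- The complexification `ℂ ⊗[ℝ] L` of a real Lie algebra, viewed as a real Lie algebra. -/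
noncomputable instance realLieTensor (L : Type*) [LieRing L] [LieAlgebra ℝ L] :
    LieAlgebra ℝ (ℂ ⊗[ℝ] L) where
  lie_smul r x y := by
    rw [← algebraMap_smul ℂ r y, ← algebraMap_smul ℂ r ⁅x, y⁆]
    exact lie_smul ((algebraMap ℝ ℂ) r) x y

/-!
Let `B` be an invariant form on `L` with `B x x = 0 → x = 0`. An abelian ideal `I` is central:
for `a ∈ I` we have `⁅a, ⁅a, x⁆⁆ = 0`, so `B ⁅a, x⁆ ⁅a, x⁆ = -B x ⁅a, ⁅a, x⁆⁆ = 0`. The centre is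
`B`-orthogonal to `⁅L, L⁆`, so an abelian ideal contained in `⁅L, L⁆` is isotropic, hence zero.
If `L` is solvable, the last nonzero term of the derived series of `⁅L, L⁆` is such an ideal, so
`⁅L, L⁆ = 0`. The real points of `𝔟` form a solvable subalgebra of `𝔤`, to which `B` restricts.
-/

namespace LieAlgebra

variable {R L : Type*} [CommRing R] [LieRing L] [LieAlgebra R L]

theorem derivedAbelianOfIdeal_le (I : LieIdeal R L) : derivedAbelianOfIdeal I ≤ I := by
  unfold derivedAbelianOfIdeal
  split
  · exact bot_le
  · exact derivedSeriesOfIdeal_le_self I _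

theorem lie_mem_derivedSeries_one (x y : L) : ⁅x, y⁆ ∈ derivedSeries R L 1 := by
  rw [derivedSeries_def, derivedSeriesOfIdeal_succ, derivedSeriesOfIdeal_zero]
  exact LieSubmodule.lie_mem_lie (LieSubmodule.mem_top x) (LieSubmodule.mem_top y)

end LieAlgebra

theorem LieSubalgebra.isSolvable_comap {R L L' : Type*} [CommRing R] [LieRing L] [LieAlgebra R L]
    [LieRing L'] [LieAlgebra R L'] {f : L →ₗ⁅R⁆ L'} (hf : Function.Injective f)
    (K : LieSubalgebra R L') [LieAlgebra.IsSolvable K] : LieAlgebra.IsSolvable (K.comap f) :=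
  have : LieAlgebra.IsSolvable ((K.comap f).map f) :=
    (inclusion_injective (map_le_iff_le_comap.mpr le_rfl)).lieAlgebra_isSolvable
  (LieAlgebra.solvable_iff_equiv_solvable (equivMapOfInjective f (K.comap f) hf)).mpr this

namespace LinearMap.BilinForm

open LieAlgebra LieModule

variable {R L : Type*} [CommRing R] [LieRing L] [LieAlgebra R L] {B : LinearMap.BilinForm R L}

theorem le_center_of_isLieAbelian (hB : B.lieInvariant L) (hanis : ∀ x, B x x = 0 → x = 0)
    (I : LieIdeal R L) [IsLieAbelian I] : I ≤ center R L := by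
  intro a ha
  refine (mem_maxTrivSubmodule R L L a).mpr fun x => ?_
  rw [← lie_skew, neg_eq_zero]
  have hax : ⁅a, x⁆ ∈ I := lie_mem_left R L I a x ha
  have haax : ⁅a, ⁅a, x⁆⁆ = 0 :=
    congrArg Subtype.val (trivial_lie_zero I I ⟨a, ha⟩ ⟨_, hax⟩)
  apply hanis
  rw [hB, haax, map_zero, neg_zero]

theorem apply_eq_zero_of_mem_derivedSeries_of_mem_center (hB : B.lieInvariant L) {w z : L}
    (hw : w ∈ derivedSeries R L 1) (hz : z ∈ center R L) : B w z = 0 := by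
  replace hw : w ∈ Submodule.span R {⁅x, y⁆ | (x : L) (y : L)} := by
    rwa [← coe_derivedSeries_one_eq]
  refine Submodule.span_le (p := LinearMap.ker (B.flip z)) |>.mpr ?_ hw
  rintro _ ⟨x, y, rfl⟩
  rw [SetLike.mem_coe, LinearMap.mem_ker, flip_apply, hB, (mem_maxTrivSubmodule R L L z).mp hz,
    map_zero, neg_zero]

theorem eq_bot_of_isLieAbelian_of_le_derivedSeries (hB : B.lieInvariant L)
    (hanis : ∀ x, B x x = 0 → x = 0) (I : LieIdeal R L) [IsLieAbelian I]
    (hI : I ≤ derivedSeries R L 1) : I = ⊥ :=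
  (LieSubmodule.eq_bot_iff I).mpr fun a ha => hanis a <|
    B.apply_eq_zero_of_mem_derivedSeries_of_mem_center hB (hI ha)
      (B.le_center_of_isLieAbelian hB hanis I ha)

theorem isLieAbelian_of_isSolvable (hB : B.lieInvariant L) (hanis : ∀ x, B x x = 0 → x = 0)
    [IsSolvable L] : IsLieAbelian L := by
  have hderived : derivedSeries R L 1 = ⊥ := by
    rw [← abelian_of_solvable_ideal_eq_bot_iff]
    have := abelian_derivedAbelianOfIdeal (derivedSeries R L 1)
    exact B.eq_bot_of_isLieAbelian_of_le_derivedSeries hB hanis _ (derivedAbelianOfIdeal_le _)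
  refine ⟨fun x y => ?_⟩
  have h := lie_mem_derivedSeries_one (R := R) x y
  rwa [hderived, LieSubmodule.mem_bot] at h

theorem isLieAbelian_lieSubalgebra_of_isSolvable (hB : B.lieInvariant L)
    (hanis : ∀ x, B x x = 0 → x = 0) (K : LieSubalgebra R L) [IsSolvable K] : IsLieAbelian K :=
  (B.restrict K.toSubmodule).isLieAbelian_of_isSolvable (fun x y z => hB x y z)
    (fun x hx => Subtype.ext (hanis x hx))

end LinearMap.BilinForm

noncomputable def oneTmulLieHom (L : Type*) [LieRing L] [LieAlgebra ℝ L] : L →ₗ⁅ℝ⁆ ℂ ⊗[ℝ] L :=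
  { TensorProduct.mk ℝ ℂ L 1 with
    map_lie' {x y} := by
      show (1 : ℂ) ⊗ₜ ⁅x, y⁆ = ⁅(1 : ℂ) ⊗ₜ x, (1 : ℂ) ⊗ₜ y⁆
      rw [LieAlgebra.ExtendScalars.bracket_tmul, one_mul] }

theorem oneTmulLieHom_injective (L : Type*) [LieRing L] [LieAlgebra ℝ L] :
    Function.Injective (oneTmulLieHom L) :=
  Module.Flat.tensorProduct_mk_injective ℝ L ℂ

theorem stmt9_general (L : Type*) [LieRing L] [LieAlgebra ℝ L]
    (B : L →ₗ[ℝ] L →ₗ[ℝ] ℝ)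
    (hpos : ∀ x : L, x ≠ 0 → 0 < B x x)
    (hinvt : ∀ x y z : L, B ⁅x, y⁆ z = - B y ⁅x, z⁆)
    (b : LieSubalgebra ℝ (ℂ ⊗[ℝ] L)) (hb : LieAlgebra.IsSolvable ↥b) :
    ∀ x y : L, (1 : ℂ) ⊗ₜ[ℝ] x ∈ b → (1 : ℂ) ⊗ₜ[ℝ] y ∈ b → ⁅x, y⁆ = 0 := by
  intro x y hx hy
  have hanis (z : L) (hz : B z z = 0) : z = 0 := by
    by_contra h
    exact (hpos z h).ne' hz
  let K := b.comap (oneTmulLieHom L)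
  have : LieAlgebra.IsSolvable K := b.isSolvable_comap (oneTmulLieHom_injective L)
  have : IsLieAbelian K :=
    LinearMap.BilinForm.isLieAbelian_lieSubalgebra_of_isSolvable hinvt hanis K
  exact congrArg Subtype.val (trivial_lie_zero K K ⟨x, hx⟩ ⟨y, hy⟩)

/-- Let `𝔤` be a compact Lie algebra (a real Lie algebra carrying an
ad-invariant positive-definite inner product `B`) and `𝔟` a solvable real subalgebra of
`𝔤_ℂ = ℂ ⊗[ℝ] 𝔤`. Then `𝔟 ∩ 𝔤` is an abelian subalgebra of `𝔤`. -/
theorem stmt9 (L : Type*) [LieRing L] [LieAlgebra ℝ L] [FiniteDimensional ℝ L]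
    (B : L →ₗ[ℝ] L →ₗ[ℝ] ℝ)
    (hsymm : ∀ x y : L, B x y = B y x)
    (hpos : ∀ x : L, x ≠ 0 → 0 < B x x)
    (hinvt : ∀ x y z : L, B ⁅x, y⁆ z = - B y ⁅x, z⁆)
    (b : LieSubalgebra ℝ (ℂ ⊗[ℝ] L)) (hb : LieAlgebra.IsSolvable ↥b) :
    ∀ x y : L, (1 : ℂ) ⊗ₜ[ℝ] x ∈ b → (1 : ℂ) ⊗ₜ[ℝ] y ∈ b → ⁅x, y⁆ = 0 :=
  stmt9_general L B hpos hinvt b hb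
end

section
/- Let 𝔤 be a compact Lie algebra, 𝔥 ⊆ 𝔤 a subalgebra with J an 𝔥-invariant integrable complex structure on 𝔤/𝔥, and let 𝔭 = 𝔞_ℂ + p⁻¹((𝔤/𝔥)₊) be the associated parabolic subalgebra of 𝔤_ℂ, with 𝔪 = 𝔭 ∩ 𝔤 = 𝔲 ⊕ 𝔥 where 𝔲 is a complement of 𝔞∩𝔥 in 𝔞. Then [𝔪, 𝔪] = [𝔥, 𝔥]. -/
open Module TensorProduct

/-- The span of all brackets of elements of a subset `S` of `𝔤`, i.e. `[S, S]`. -/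
def bracketSpan {L : Type*} [LieRing L] [LieAlgebra ℝ L] (S : Set L) : Submodule ℝ L :=
  Submodule.span ℝ {z : L | ∃ x ∈ S, ∃ y ∈ S, z = ⁅x, y⁆}

/-!
The bracket of `𝔪 = 𝔲 ⊕ 𝔥` lands in `𝔥`: `𝔲 ⊆ 𝔞` is abelian, and `𝔞` normalizes `𝔥` because it
normalizes `𝔩 = p⁻¹((𝔤/𝔥)₊)`, whose real points are exactly `𝔥` (a real vector in the
`i`-eigenspace of `J_ℂ` vanishes). On the other hand, with respect to a positive definite
invariant form every subalgebra `𝔪` splits as `[𝔪, 𝔪] ⊕ ([𝔪, 𝔪]ᗮ ∩ 𝔪)`, and the second summand is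
central in `𝔪` since `B([x, y], [x, y]) = B([y, [x, y]], x)`; so `[𝔪, 𝔪]` is perfect. Hence `[𝔪, 𝔪] = [[𝔪, 𝔪], [𝔪, 𝔪]] ⊆ [𝔥, 𝔥] ⊆ [𝔪, 𝔪]`.
-/

section BracketSpan

variable {L : Type*} [LieRing L] [LieAlgebra ℝ L]

lemma bracket_mem_bracketSpan {S : Set L} {x y : L} (hx : x ∈ S) (hy : y ∈ S) :
    ⁅x, y⁆ ∈ bracketSpan S :=
  Submodule.subset_span ⟨x, hx, y, hy, rfl⟩

lemma bracketSpan_le {S : Set L} {N : Submodule ℝ L} (h : ∀ x ∈ S, ∀ y ∈ S, ⁅x, y⁆ ∈ N) :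
    bracketSpan S ≤ N :=
  Submodule.span_le.2 fun _ ⟨x, hx, y, hy, hz⟩ => hz ▸ h x hx y hy

lemma bracketSpan_mono {S T : Set L} (h : S ⊆ T) : bracketSpan S ≤ bracketSpan T :=
  bracketSpan_le fun _ hx _ hy => bracket_mem_bracketSpan (h hx) (h hy)

lemma bracketSpan_sup_le {u : Submodule ℝ L} {H : LieSubalgebra ℝ L}
    (hu : ∀ x ∈ u, ∀ y ∈ u, ⁅x, y⁆ = 0) (huH : ∀ t ∈ u, ∀ h ∈ H, ⁅t, h⁆ ∈ H) :
    bracketSpan ((u ⊔ H.toSubmodule : Submodule ℝ L) : Set L) ≤ H.toSubmodule := by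
  refine bracketSpan_le fun x hx y hy => ?_
  obtain ⟨t, ht, h, hh, rfl⟩ := Submodule.mem_sup.1 hx
  obtain ⟨t', ht', h', hh', rfl⟩ := Submodule.mem_sup.1 hy
  have hht' : ⁅h, t'⁆ ∈ H := by
    rw [← lie_skew]
    exact H.neg_mem (huH t' ht' h hh)
  rw [add_lie, lie_add, lie_add, hu t ht t' ht', zero_add]
  exact H.add_mem (huH t ht h' hh') (H.add_mem hht' (H.lie_mem hh hh'))

end BracketSpan

lemma LinearMap.BilinForm.isCompl_orthogonal_of_pos {K V : Type*} [Field K] [LinearOrder K]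
    [IsStrictOrderedRing K] [AddCommGroup V] [Module K V] [FiniteDimensional K V]
    {B : LinearMap.BilinForm K V} (hpos : ∀ x : V, x ≠ 0 → 0 < B x x) (W : Submodule K V) :
    IsCompl W (B.orthogonal W) := by
  have hdisj : W ⊓ B.orthogonal W = ⊥ := by
    refine eq_bot_iff.2 fun x ⟨hxW, hxo⟩ => ?_
    by_contra hx
    exact (hpos x hx).ne' (hxo x hxW)
  refine IsCompl.of_eq hdisj (Submodule.eq_top_of_finrank_eq <|
    (Submodule.finrank_le _).antisymm ?_)
  have hsum := Submodule.finrank_sup_add_finrank_inf_eq W (B.orthogonal W)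
  have horth := LinearMap.BilinForm.finrank_add_finrank_orthogonal' (B := B) W
  rw [hdisj, finrank_bot] at hsum
  omega

section InvariantForm

variable {L : Type*} [LieRing L] [LieAlgebra ℝ L] {B : LinearMap.BilinForm ℝ L}

lemma lie_eq_zero_of_mem_orthogonal_bracketSpan (hpos : ∀ x : L, x ≠ 0 → 0 < B x x)
    (hinvt : ∀ x y z : L, B ⁅x, y⁆ z = - B y ⁅x, z⁆) {m : Submodule ℝ L}
    (hcl : ∀ x ∈ m, ∀ y ∈ m, ⁅x, y⁆ ∈ m) {x y : L} (hx : x ∈ m)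
    (hxD : x ∈ B.orthogonal (bracketSpan (m : Set L))) (hy : y ∈ m) : ⁅x, y⁆ = 0 := by
  by_contra hne
  have hD : ⁅y, ⁅x, y⁆⁆ ∈ bracketSpan (m : Set L) := bracket_mem_bracketSpan hy (hcl x hx y hy)
  have hself : B ⁅x, y⁆ ⁅x, y⁆ = 0 := by
    calc B ⁅x, y⁆ ⁅x, y⁆ = -B ⁅x, y⁆ ⁅y, x⁆ := by rw [← lie_skew y x, map_neg, neg_neg]
      _ = B ⁅y, ⁅x, y⁆⁆ x := (hinvt y _ x).symm
      _ = 0 := hxD _ hD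
  exact (hpos _ hne).ne' hself

lemma bracketSpan_le_bracketSpan_bracketSpan [FiniteDimensional ℝ L]
    (hpos : ∀ x : L, x ≠ 0 → 0 < B x x) (hinvt : ∀ x y z : L, B ⁅x, y⁆ z = - B y ⁅x, z⁆)
    {m : Submodule ℝ L} (hcl : ∀ x ∈ m, ∀ y ∈ m, ⁅x, y⁆ ∈ m) :
    bracketSpan (m : Set L) ≤ bracketSpan (bracketSpan (m : Set L) : Set L) := by
  set D := bracketSpan (m : Set L)
  have hDm : D ≤ m := bracketSpan_le hcl
  have hsplit : m = D ⊔ B.orthogonal D ⊓ m := by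
    rw [← sup_inf_assoc_of_le _ hDm, (B.isCompl_orthogonal_of_pos hpos D).sup_eq_top, top_inf_eq]
  have hcentral : ∀ z ∈ B.orthogonal D ⊓ m, ∀ w ∈ m, ⁅z, w⁆ = 0 := fun z ⟨hzD, hzm⟩ _ hw =>
    lie_eq_zero_of_mem_orthogonal_bracketSpan hpos hinvt hcl hzm hzD hw
  refine bracketSpan_le fun x hx y hy => ?_
  obtain ⟨d, hd, z, hz, rfl⟩ := Submodule.mem_sup.1 (hsplit ▸ hx)
  obtain ⟨d', hd', z', hz', rfl⟩ := Submodule.mem_sup.1 (hsplit ▸ hy)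
  have hdz' : ⁅d, z'⁆ = 0 := by rw [← lie_skew, hcentral z' hz' d (hDm hd), neg_zero]
  rw [add_lie, lie_add, lie_add, hdz', hcentral z hz d' (hDm hd'), hcentral z hz z' hz'.2,
    add_zero, add_zero, add_zero]
  exact bracket_mem_bracketSpan hd hd'

end InvariantForm

lemma eq_zero_of_one_tmul_mem_eigenspace {V : Type*} [AddCommGroup V] [Module ℝ V]
    {f : Module.End ℝ V} {μ : ℂ} (hμ : μ.im ≠ 0) {v : V}
    (hv : (1 : ℂ) ⊗ₜ[ℝ] v ∈ Module.End.eigenspace (f.baseChange ℂ) μ) : v = 0 := by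
  have heq : (1 : ℂ) ⊗ₜ[ℝ] f v = μ ⊗ₜ[ℝ] v := by
    rw [← LinearMap.baseChange_tmul, Module.End.mem_eigenspace_iff.1 hv, smul_tmul', smul_eq_mul,
      mul_one]
  have him := congrArg (fun w => TensorProduct.lid ℝ V (Complex.imLm.rTensor V w)) heq
  simp only [LinearMap.rTensor_tmul, TensorProduct.lid_tmul, Complex.imLm_coe, Complex.one_im,
    zero_smul] at him
  exact (smul_eq_zero.1 him.symm).resolve_left hμ

lemma lie_mem_of_forall_lie_mem_lsub {L : Type*} [LieRing L] [LieAlgebra ℝ L]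
    {H : LieSubalgebra ℝ L} {J : (L ⧸ H.toSubmodule) →ₗ[ℝ] (L ⧸ H.toSubmodule)} {t : L}
    (ht : ∀ x ∈ lsub H J, ⁅(1 : ℂ) ⊗ₜ[ℝ] t, x⁆ ∈ lsub H J) {h : L} (hh : h ∈ H) :
    ⁅t, h⁆ ∈ H := by
  have hq : qmk H h = 0 := (Submodule.Quotient.mk_eq_zero _).2 hh
  have hl : (1 : ℂ) ⊗ₜ[ℝ] h ∈ lsub H J := by
    rw [lsub, Submodule.mem_comap, LinearMap.baseChange_tmul, hq, tmul_zero]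
    exact Submodule.zero_mem _
  have hth := ht _ hl
  rw [LieAlgebra.ExtendScalars.bracket_tmul, one_mul, lsub, Submodule.mem_comap,
    LinearMap.baseChange_tmul] at hth
  exact (Submodule.Quotient.mk_eq_zero _).1 (eq_zero_of_one_tmul_mem_eigenspace (by simp) hth)

theorem stmt13_general {L : Type*} [LieRing L] [LieAlgebra ℝ L] [FiniteDimensional ℝ L]
    (B : L →ₗ[ℝ] L →ₗ[ℝ] ℝ)
    (hpos : ∀ x : L, x ≠ 0 → 0 < B x x)
    (hinvt : ∀ x y z : L, B ⁅x, y⁆ z = - B y ⁅x, z⁆)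
    (H : LieSubalgebra ℝ L)
    (J : (L ⧸ H.toSubmodule) →ₗ[ℝ] (L ⧸ H.toSubmodule))
    (a : LieSubalgebra ℝ L) (habel : IsLieAbelian ↥a)
    (hnorm : ∀ t ∈ a, ∀ x ∈ lsub H J, ⁅(1 : ℂ) ⊗ₜ[ℝ] t, x⁆ ∈ lsub H J)
    (m : Submodule ℝ L)
    -- `𝔲` a complement of `𝔞 ∩ 𝔥` in `𝔞`, and `𝔪 = 𝔲 ⊕ 𝔥`:
    (u : Submodule ℝ L)
    (hu2 : u ⊔ (a.toSubmodule ⊓ H.toSubmodule) = a.toSubmodule)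
    (hmu : m = u ⊔ H.toSubmodule) :
    bracketSpan (m : Set L) = bracketSpan (H : Set L) := by
  have hua : u ≤ a.toSubmodule := hu2 ▸ le_sup_left
  have hmH : bracketSpan (m : Set L) ≤ H.toSubmodule := hmu ▸ bracketSpan_sup_le
    (fun x hx y hy => congrArg Subtype.val (trivial_lie_zero a a ⟨x, hua hx⟩ ⟨y, hua hy⟩))
    (fun t ht _ hh => lie_mem_of_forall_lie_mem_lsub (hnorm t (hua ht)) hh)
  have hHm : H.toSubmodule ≤ m := hmu ▸ le_sup_right
  apply le_antisymm
  · calc bracketSpan (m : Set L)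
        ≤ bracketSpan (bracketSpan (m : Set L) : Set L) :=
          bracketSpan_le_bracketSpan_bracketSpan hpos hinvt fun x hx y hy =>
            hHm (hmH (bracket_mem_bracketSpan hx hy))
      _ ≤ bracketSpan (H : Set L) := bracketSpan_mono hmH
  · exact bracketSpan_mono hHm

/-- `𝔤` compact, `J` an `𝔥`-invariant integrable complex structure on
`𝔤/𝔥`, `𝔭 = 𝔞_ℂ + p⁻¹((𝔤/𝔥)₊)` the associated parabolic subalgebra of `𝔤_ℂ` (for `𝔞`
a Cartan subalgebra normalizing `𝔩 = p⁻¹((𝔤/𝔥)₊)`), and `𝔪 = 𝔭 ∩ 𝔤 = 𝔲 ⊕ 𝔥` where `𝔲`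
is a complement of `𝔞 ∩ 𝔥` in `𝔞`.  Then `[𝔪, 𝔪] = [𝔥, 𝔥]`. -/
theorem stmt13 {L : Type*} [LieRing L] [LieAlgebra ℝ L] [FiniteDimensional ℝ L]
    (B : L →ₗ[ℝ] L →ₗ[ℝ] ℝ)
    (hsymm : ∀ x y : L, B x y = B y x)
    (hpos : ∀ x : L, x ≠ 0 → 0 < B x x)
    (hinvt : ∀ x y z : L, B ⁅x, y⁆ z = - B y ⁅x, z⁆)
    (H : LieSubalgebra ℝ L)
    (J : (L ⧸ H.toSubmodule) →ₗ[ℝ] (L ⧸ H.toSubmodule))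
    (hJ2 : J ∘ₗ J = -LinearMap.id)
    (hinv : ∀ h ∈ H, ∀ x y : L,
      qmk H y = J (qmk H x) → J (qmk H ⁅h, x⁆) = qmk H ⁅h, y⁆)
    (hint : Integrable H J)
    (a : LieSubalgebra ℝ L) (habel : IsLieAbelian ↥a)
    (hamax : ∀ a' : LieSubalgebra ℝ L, IsLieAbelian ↥a' → a ≤ a' → a' = a)
    (hnorm : ∀ t ∈ a, ∀ x ∈ lsub H J, ⁅(1 : ℂ) ⊗ₜ[ℝ] t, x⁆ ∈ lsub H J)
    -- `𝔪 = 𝔭 ∩ 𝔤` for the parabolic `𝔭 = 𝔞_ℂ + 𝔩`: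
    (m : Submodule ℝ L)
    (hm : m = Submodule.comap (TensorProduct.mk ℝ ℂ L 1)
      (Submodule.restrictScalars ℝ (Submodule.baseChange ℂ a.toSubmodule ⊔ lsub H J)))
    -- `𝔲` a complement of `𝔞 ∩ 𝔥` in `𝔞`, and `𝔪 = 𝔲 ⊕ 𝔥`:
    (u : Submodule ℝ L)
    (hu1 : u ⊓ (a.toSubmodule ⊓ H.toSubmodule) = ⊥)
    (hu2 : u ⊔ (a.toSubmodule ⊓ H.toSubmodule) = a.toSubmodule)
    (hmu : m = u ⊔ H.toSubmodule) :
    bracketSpan (m : Set L) = bracketSpan (H : Set L) :=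
  stmt13_general B hpos hinvt H J a habel hnorm m u hu2 hmu
end
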